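/- Let X be a geodesic δ-hyperbolic space with basepoint o. Let γ : ℝ → X be a geodesic parametrized so that γ(0) = p_γ(o) is a closest point of γ to o. Then liminf_{s → +∞} (γ(s) | γ(−s))_o ≥ |γ(0)| − 141δ, where |γ(0)| = d(o, γ(0)) and (x|y)_o is the Gromov product. Consequently the Gromov product of the two endpoints of γ at infinity is at least |γ(0)| − 141δ. -/
import Mathlib

/-- The Gromov product `(x|y)_o`. -/
noncomputable def gromovProd {X : Type*} [MetricSpace X] (o x y : X) : ℝ :=
  (dist o x + dist o y - dist x y) / 2

/-- `δ`-hyperbolicity in Gromov's four-point sense. -/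
def IsDeltaHyperbolic (X : Type*) [MetricSpace X] (δ : ℝ) : Prop :=
  ∀ x₀ x₁ x₂ x₃ : X,
    min (gromovProd x₀ x₁ x₂) (gromovProd x₀ x₂ x₃) - δ ≤ gromovProd x₀ x₁ x₃

/-- A geodesic metric space. -/
def IsGeodesicSpace (X : Type*) [MetricSpace X] : Prop :=
  ∀ x y : X, ∃ f : ℝ → X, f 0 = x ∧ f (dist x y) = y ∧
    ∀ s ∈ Set.Icc (0 : ℝ) (dist x y), ∀ t ∈ Set.Icc (0 : ℝ) (dist x y),
      dist (f s) (f t) = |s - t|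

/-- Core estimate: if `γ 0` is a closest point to `o` on the ray, then for `s > 2δ`
the Gromov product `(γ 0 | γ s)_o` is at least `|γ 0| − 2δ`. -/
lemma gromovProd_ray_key {X : Type*} [MetricSpace X] {δ : ℝ} (hδ : 0 ≤ δ)
    (hhyp : IsDeltaHyperbolic X δ) (o : X) (γ : ℝ → X)
    (hγ : ∀ s t : ℝ, dist (γ s) (γ t) = |s - t|)
    (hproj : ∀ s : ℝ, dist o (γ 0) ≤ dist o (γ s))
    {s : ℝ} (hs : 2 * δ < s) :
    dist o (γ 0) - 2 * δ ≤ gromovProd o (γ 0) (γ s) := by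
  have aux : ∀ t : ℝ, 2 * δ < t → t ≤ s →
      dist o (γ 0) - t / 2 - δ ≤ gromovProd o (γ 0) (γ s) := by
    intro t ht hts
    have h1 : dist (γ 0) (γ t) = t := by
      rw [hγ]; rw [abs_of_nonpos (by linarith)]; ring
    have h2 : dist (γ t) (γ s) = s - t := by
      rw [hγ]; rw [abs_of_nonpos (by linarith)]; ring
    have h3 : dist (γ 0) (γ s) = s := by
      rw [hγ]; rw [abs_of_nonpos (by linarith)]; ring
    have hm1 := hproj t
    have hm2 := hproj s
    have hhyp' := hhyp o (γ 0) (γ t) (γ s)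
    -- (γ t | γ s)_o ≥ (γ 0 | γ s)_o + t/2 > (γ 0 | γ s)_o + δ
    have hQ : gromovProd o (γ 0) (γ s) + t / 2 ≤ gromovProd o (γ t) (γ s) := by
      unfold gromovProd
      rw [h2, h3]; linarith
    rcases min_cases (gromovProd o (γ 0) (γ t)) (gromovProd o (γ t) (γ s)) with
      ⟨hmin, _⟩ | ⟨hmin, _⟩
    · rw [hmin] at hhyp'
      unfold gromovProd at hhyp' ⊢
      rw [h1] at hhyp'
      linarith
    · rw [hmin] at hhyp'
      linarith
  -- take t → 2δ⁺
  have : ∀ ε > (0:ℝ), dist o (γ 0) - 2 * δ ≤ gromovProd o (γ 0) (γ s) + ε := by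
    intro ε hε
    have h1 : 2 * δ < min s (2 * δ + 2 * ε) := lt_min hs (by linarith)
    have h2 : min s (2 * δ + 2 * ε) ≤ s := min_le_left _ _
    have := aux _ h1 h2
    have h3 : min s (2 * δ + 2 * ε) ≤ 2 * δ + 2 * ε := min_le_right _ _
    linarith
  linarith [le_of_forall_pos_le_add this]

/-- If a geodesic line `γ` is parametrized so that `γ 0` is a closest point to the base point
`o`, then `liminf_{s → ∞} (γ(s) | γ(−s))_o ≥ |γ(0)| − 141δ`; consequently the Gromov product
of the two endpoints of `γ` at infinity is at least `|γ(0)| − 141δ`. -/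
theorem gromov_product_of_endpoints_of_geodesic_line
    (X : Type*) [MetricSpace X] (δ : ℝ) (hδ : 0 ≤ δ)
    (hgeo : IsGeodesicSpace X) (hhyp : IsDeltaHyperbolic X δ)
    (o : X) (γ : ℝ → X)
    (hγ : ∀ s t : ℝ, dist (γ s) (γ t) = |s - t|)
    (hproj : ∀ s : ℝ, dist o (γ 0) ≤ dist o (γ s)) :
    dist o (γ 0) - 141 * δ ≤
      Filter.liminf (fun s : ℝ => gromovProd o (γ s) (γ (-s))) Filter.atTop := by
  set m := dist o (γ 0) with hm
  -- upper bound (for coboundedness)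
  have hub : ∀ s : ℝ, gromovProd o (γ s) (γ (-s)) ≤ m := by
    intro s
    have h1 : dist o (γ s) ≤ m + dist (γ 0) (γ s) := by
      calc dist o (γ s) ≤ dist o (γ 0) + dist (γ 0) (γ s) := dist_triangle _ _ _
        _ = m + dist (γ 0) (γ s) := rfl
    have h2 : dist o (γ (-s)) ≤ m + dist (γ 0) (γ (-s)) := by
      calc dist o (γ (-s)) ≤ dist o (γ 0) + dist (γ 0) (γ (-s)) := dist_triangle _ _ _
        _ = _ := rfl
    have h3 : dist (γ 0) (γ s) + dist (γ 0) (γ (-s)) = dist (γ s) (γ (-s)) := by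
      rw [hγ, hγ, hγ]
      rcases le_total 0 s with h | h
      · rw [abs_of_nonpos (by linarith : (0:ℝ) - s ≤ 0), abs_of_nonneg (by linarith : (0:ℝ) - (-s) ≥ 0),
          abs_of_nonneg (by linarith : s - (-s) ≥ 0)]; ring
      · rw [abs_of_nonneg (by linarith : (0:ℝ) - s ≥ 0), abs_of_nonpos (by linarith : (0:ℝ) - (-s) ≤ 0),
          abs_of_nonpos (by linarith : s - (-s) ≤ 0)]; ring
    unfold gromovProd
    linarith
  -- lower bound for s > 2δ
  have hlb : ∀ s : ℝ, 2 * δ < s → m - 141 * δ ≤ gromovProd o (γ s) (γ (-s)) := by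
    intro s hs
    have hpos := gromovProd_ray_key hδ hhyp o γ hγ hproj hs
    -- negative ray
    have hγ' : ∀ a b : ℝ, dist (γ (-a)) (γ (-b)) = |a - b| := by
      intro a b; rw [hγ]; rw [abs_sub_comm]; congr 1; ring
    have hneg : m - 2 * δ ≤ gromovProd o (γ 0) (γ (-s)) := by
      have := gromovProd_ray_key hδ hhyp o (fun t => γ (-t))
        (fun a b => hγ' a b)
        (fun t => by simpa using hproj (-t)) hs
      simpa using this
    have hhyp' := hhyp o (γ s) (γ 0) (γ (-s))
    have hcomm : gromovProd o (γ s) (γ 0) = gromovProd o (γ 0) (γ s) := by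
      unfold gromovProd; rw [dist_comm (γ s) (γ 0)]; ring
    rw [hcomm] at hhyp'
    have hmin : m - 2 * δ ≤ min (gromovProd o (γ 0) (γ s)) (gromovProd o (γ 0) (γ (-s))) :=
      le_min hpos hneg
    have : m - 3 * δ ≤ gromovProd o (γ s) (γ (-s)) := by linarith [hhyp']
    linarith
  -- conclude about liminf
  have hev : ∀ᶠ s in Filter.atTop, m - 141 * δ ≤ gromovProd o (γ s) (γ (-s)) :=
    Filter.eventually_atTop.2 ⟨2 * δ + 1, fun s hs => hlb s (by linarith)⟩
  exact Filter.le_liminf_of_le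
    (Filter.isCoboundedUnder_ge_of_eventually_le _ (Filter.Eventually.of_forall hub)) hev
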